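/- Let n ≥ 2, r = (1-n)/2, l ≥ 0, d ≥ 0, p = 2(l+d-r), and F_{p,l}(φ,θ) = e^{ipφ/2} C̃_d^{l-r}(cos θ) sin^l θ where C̃_d^{l-r} is the (normalized) Gegenbauer polynomial. Then z·F_{p,l} = p F_{p,l}, and n^-·F_{p,l} is a scalar multiple of F_{p-2,l}, with n^-·F_{p,l} = 0 if and only if d = 0 (i.e. p = 2(l-r)). -/

import Mathlib

open Complex

noncomputable def dphi (F : ℝ × ℝ → ℂ) (p : ℝ × ℝ) : ℂ := deriv (fun s => F (s, p.2)) p.1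

noncomputable def dtheta (F : ℝ × ℝ → ℂ) (p : ℝ × ℝ) : ℂ := deriv (fun s => F (p.1, s)) p.2

/-- `z = -2i∂_φ`. -/
noncomputable def zOp (F : ℝ × ℝ → ℂ) : ℝ × ℝ → ℂ := fun p => -2 * Complex.I * dphi F p

/-- `n⁺ = e^{iφ}(r cos θ + i cos θ ∂_φ - sin θ ∂_θ)`. -/
noncomputable def nPlus (r : ℝ) (F : ℝ × ℝ → ℂ) : ℝ × ℝ → ℂ := fun p =>
  Complex.exp (Complex.I * p.1) *
    ((r : ℂ) * Real.cos p.2 * F p + Complex.I * Real.cos p.2 * dphi F p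
      - Real.sin p.2 * dtheta F p)

/-- `n⁻ = e^{-iφ}(r cos θ - i cos θ ∂_φ - sin θ ∂_θ)`. -/
noncomputable def nMinus (r : ℝ) (F : ℝ × ℝ → ℂ) : ℝ × ℝ → ℂ := fun p =>
  Complex.exp (-Complex.I * p.1) *
    ((r : ℂ) * Real.cos p.2 * F p - Complex.I * Real.cos p.2 * dphi F p
      - Real.sin p.2 * dtheta F p)


open Polynomial in
noncomputable def gegenbauer (α : ℝ) : ℕ → Polynomial ℝ
  | 0 => 1
  | 1 => Polynomial.C (2 * α) * Polynomial.X
  | (d + 2) =>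
      Polynomial.C ((2 * ((d : ℝ) + 1 + α)) / ((d : ℝ) + 2)) * Polynomial.X
          * gegenbauer α (d + 1)
        - Polynomial.C (((d : ℝ) + 2 * α) / ((d : ℝ) + 2)) * gegenbauer α d

/-- `F_{p,l}(φ,θ) = e^{ipφ/2}·C_d^{l-r}(cos θ)·sin^l θ`, with `p = 2(l+d-r)`. -/
noncomputable def Ffun (r : ℝ) (l d : ℕ) : ℝ × ℝ → ℂ := fun p =>
  Complex.exp (Complex.I * (((l : ℝ) + d - r : ℝ) : ℂ) * p.1) *
    (((gegenbauer ((l : ℝ) - r) d).eval (Real.cos p.2) : ℝ) : ℂ) *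
    ((Real.sin p.2 : ℝ) : ℂ) ^ l

/-!
`F_{p,l}` separates as `e^{iμφ} G(θ)` with `μ = l + d - r`, so `∂_φ` acts by `iμ` and `n⁻`
becomes `e^{i(μ-1)φ}` times the first-order operator `G ↦ (r + μ) cos θ · G - sin θ · G'`.
On `G = C_d(cos θ) sin^l θ` this yields `(d x C_d(x) + (1 - x²) C_d'(x)) sin^l θ` at `x = cos θ`,
and the Gegenbauer identity `(1 - x²) C_{d+1}' = (d + 2α) C_d - (d + 1) x C_{d+1}` turns it into
`(d + 2α) C_d(x) sin^l θ` when the degree is `d + 1`. Here `α = l - r ≥ 1/2`, and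
`d! C_d(1) = (2α)_d > 0` shows that `C_d ≠ 0`, so `F` does not vanish identically.
-/

open Polynomial

section Gegenbauer

variable (α : ℝ)

lemma gegenbauer_eval_add_two (d : ℕ) (x : ℝ) :
    ((d : ℝ) + 2) * (gegenbauer α (d + 2)).eval x
      = 2 * ((d : ℝ) + 1 + α) * x * (gegenbauer α (d + 1)).eval x
        - ((d : ℝ) + 2 * α) * (gegenbauer α d).eval x := by
  simp only [gegenbauer, eval_sub, eval_mul, eval_C, eval_X]
  field_simp

lemma derivative_gegenbauer_eval_add_two (d : ℕ) (x : ℝ) :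
    ((d : ℝ) + 2) * (gegenbauer α (d + 2)).derivative.eval x
      = 2 * ((d : ℝ) + 1 + α) * ((gegenbauer α (d + 1)).eval x
          + x * (gegenbauer α (d + 1)).derivative.eval x)
        - ((d : ℝ) + 2 * α) * (gegenbauer α d).derivative.eval x := by
  simp only [gegenbauer, derivative_sub, derivative_mul, derivative_C, derivative_X,
    eval_sub, eval_mul, eval_add, eval_C, eval_X, eval_zero, eval_one]
  field_simp
  ring

lemma one_sub_sq_mul_derivative_gegenbauer_succ_eval (d : ℕ) (x : ℝ) :
    (1 - x ^ 2) * (gegenbauer α (d + 1)).derivative.eval x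
      = ((d : ℝ) + 2 * α) * (gegenbauer α d).eval x
        - ((d : ℝ) + 1) * x * (gegenbauer α (d + 1)).eval x := by
  induction d using Nat.twoStepInduction with
  | zero =>
    simp only [gegenbauer, derivative_mul, derivative_C, derivative_X,
      eval_mul, eval_add, eval_C, eval_X, eval_zero, eval_one]
    push_cast
    ring
  | one =>
    simp only [gegenbauer, derivative_sub, derivative_mul, derivative_C, derivative_X,
      derivative_one, eval_sub, eval_mul, eval_add, eval_C, eval_X, eval_zero, eval_one]
    push_cast
    field_simp
    ring
  | more k ih₀ ih₁ =>
    apply mul_left_cancel₀ (by positivity : ((k : ℝ) + 3) ≠ 0)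
    have rec₀ := gegenbauer_eval_add_two α k x
    have rec₁ := gegenbauer_eval_add_two α (k + 1) x
    have drec₁ := derivative_gegenbauer_eval_add_two α (k + 1) x
    push_cast at rec₁ drec₁ ih₁ ⊢
    linear_combination (1 - x ^ 2) * drec₁ + ((k : ℝ) + 3) * x * rec₁
      + 2 * ((k : ℝ) + 2 + α) * x * ih₁ - ((k : ℝ) + 1 + 2 * α) * ih₀
      - ((k : ℝ) + 1 + 2 * α) * rec₀

lemma factorial_mul_gegenbauer_eval_one (d : ℕ) :
    (d.factorial : ℝ) * (gegenbauer α d).eval 1 = (ascPochhammer ℝ d).eval (2 * α) := by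
  induction d using Nat.twoStepInduction with
  | zero => simp [gegenbauer]
  | one => simp [gegenbauer]
  | more k ih₀ ih₁ =>
    have hrec := gegenbauer_eval_add_two α k 1
    simp only [ascPochhammer_succ_eval, Nat.factorial_succ] at ih₁ ⊢
    push_cast at ih₁ ⊢
    linear_combination ((k : ℝ) + 1) * (k.factorial : ℝ) * hrec + 2 * ((k : ℝ) + 1 + α) * ih₁
      - ((k : ℝ) + 1) * ((k : ℝ) + 2 * α) * ih₀

lemma gegenbauer_ne_zero {α : ℝ} (hα : 0 < α) (d : ℕ) : gegenbauer α d ≠ 0 := by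
  intro h
  have := factorial_mul_gegenbauer_eval_one α d
  rw [h, eval_zero, mul_zero] at this
  exact (ascPochhammer_pos d _ (by positivity)).ne this

end Gegenbauer

section SeparatedVariables

variable (μ : ℝ) (G : ℝ → ℝ)

lemma dphi_exp_mul (p : ℝ × ℝ) :
    dphi (fun q => cexp (I * μ * q.1) * G q.2) p = I * μ * (cexp (I * μ * p.1) * G p.2) := by
  have hexp : HasDerivAt (fun s : ℝ => cexp (I * μ * s)) (cexp (I * μ * p.1) * (I * μ)) p.1 := by
    simpa using ((hasDerivAt_id (p.1 : ℂ)).const_mul (I * μ)).cexp.comp_ofReal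
  dsimp only [dphi]
  rw [(hexp.mul_const _).deriv]
  ring

lemma zOp_exp_mul (p : ℝ × ℝ) :
    zOp (fun q => cexp (I * μ * q.1) * G q.2) p
      = ((2 * μ : ℝ) : ℂ) * (cexp (I * μ * p.1) * G p.2) := by
  rw [zOp, dphi_exp_mul]
  push_cast
  linear_combination (-2 * μ * (cexp (I * μ * p.1) * G p.2)) * I_mul_I

lemma dtheta_exp_mul {G' : ℝ} {p : ℝ × ℝ} (hG : HasDerivAt G G' p.2) :
    dtheta (fun q => cexp (I * μ * q.1) * G q.2) p = cexp (I * μ * p.1) * G' := by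
  dsimp only [dtheta]
  exact (hG.ofReal_comp.const_mul _).deriv

lemma nMinus_exp_mul (r : ℝ) {G' : ℝ} {p : ℝ × ℝ} (hG : HasDerivAt G G' p.2) :
    nMinus r (fun q => cexp (I * μ * q.1) * G q.2) p
      = cexp (I * (μ - 1 : ℝ) * p.1) *
          ((r + μ) * Real.cos p.2 * G p.2 - Real.sin p.2 * G' : ℝ) := by
  have hexp : cexp (I * (μ - 1 : ℝ) * p.1) = cexp (-I * p.1) * cexp (I * μ * p.1) := by
    rw [← Complex.exp_add]
    push_cast
    ring_nf
  rw [nMinus, dphi_exp_mul, dtheta_exp_mul μ G hG, hexp]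
  simp only [ofReal_sub, ofReal_mul, ofReal_add]
  linear_combination
    (-cexp (-I * p.1) * Real.cos p.2 * μ * (cexp (I * μ * p.1) * G p.2)) * I_mul_I

end SeparatedVariables

section Basis

variable (r : ℝ) (l : ℕ)

lemma Ffun_eq (d : ℕ) :
    Ffun r l d = fun q => cexp (I * ((l + d - r : ℝ) : ℂ) * q.1) *
      (((gegenbauer (l - r) d).eval (Real.cos q.2) * Real.sin q.2 ^ l : ℝ) : ℂ) := by
  funext q
  simp only [Ffun, ofReal_mul, ofReal_pow]
  ring

lemma hasDerivAt_eval_cos_mul_sin_pow (P : ℝ[X]) (θ : ℝ) :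
    HasDerivAt (fun θ => P.eval (Real.cos θ) * Real.sin θ ^ l)
      (P.derivative.eval (Real.cos θ) * -Real.sin θ * Real.sin θ ^ l
        + P.eval (Real.cos θ) * ((l : ℝ) * Real.sin θ ^ (l - 1) * Real.cos θ)) θ :=
  ((P.hasDerivAt _).comp θ (Real.hasDerivAt_cos θ)).mul ((Real.hasDerivAt_sin θ).pow l)

lemma zOp_Ffun (d : ℕ) (p : ℝ × ℝ) :
    zOp (Ffun r l d) p = ((2 * ((l : ℝ) + d - r) : ℝ) : ℂ) * Ffun r l d p := by
  rw [Ffun_eq]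
  exact zOp_exp_mul _ (fun θ => (gegenbauer (l - r) d).eval (Real.cos θ) * Real.sin θ ^ l) p

lemma nMinus_Ffun (d : ℕ) (p : ℝ × ℝ) :
    nMinus r (Ffun r l d) p = cexp (I * ((l + d - r - 1 : ℝ) : ℂ) * p.1) *
      (((d * Real.cos p.2 * (gegenbauer (l - r) d).eval (Real.cos p.2)
        + (1 - Real.cos p.2 ^ 2) * (gegenbauer (l - r) d).derivative.eval (Real.cos p.2))
          * Real.sin p.2 ^ l : ℝ) : ℂ) := by
  rw [Ffun_eq, nMinus_exp_mul _ _ r (hasDerivAt_eval_cos_mul_sin_pow l _ p.2)]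
  have hpow : (l : ℝ) * Real.sin p.2 ^ (l - 1) * Real.sin p.2 = l * Real.sin p.2 ^ l := by
    rcases Nat.eq_zero_or_pos l with rfl | hl
    · simp
    · rw [mul_assoc, pow_sub_one_mul hl.ne']
  congr 4
  linear_combination
    ((gegenbauer (l - r) d).derivative.eval (Real.cos p.2) * Real.sin p.2 ^ l) * Real.sin_sq p.2
    - (gegenbauer (l - r) d).eval (Real.cos p.2) * Real.cos p.2 * hpow

lemma nMinus_Ffun_zero (p : ℝ × ℝ) : nMinus r (Ffun r l 0) p = 0 := by
  simp [nMinus_Ffun, gegenbauer]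

lemma nMinus_Ffun_succ (d : ℕ) (p : ℝ × ℝ) :
    nMinus r (Ffun r l (d + 1)) p = ((d + 2 * (l - r) : ℝ) : ℂ) * Ffun r l d p := by
  have hexponent : ((l : ℝ) + (d + 1 : ℕ) - r - 1) = l + d - r := by push_cast; ring
  have hprofile :
      (((d + 1 : ℕ) : ℝ) * Real.cos p.2 * (gegenbauer (l - r) (d + 1)).eval (Real.cos p.2)
      + (1 - Real.cos p.2 ^ 2) * (gegenbauer (l - r) (d + 1)).derivative.eval (Real.cos p.2))
        * Real.sin p.2 ^ l
      = (d + 2 * (l - r)) * ((gegenbauer (l - r) d).eval (Real.cos p.2) * Real.sin p.2 ^ l) := by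
    push_cast
    linear_combination Real.sin p.2 ^ l *
      one_sub_sq_mul_derivative_gegenbauer_succ_eval (l - r) d (Real.cos p.2)
  rw [nMinus_Ffun, hexponent, hprofile, Ffun_eq, ofReal_mul]
  ring

lemma exists_Ffun_ne_zero {d : ℕ} (h : gegenbauer (l - r) d ≠ 0) : ∃ p, Ffun r l d p ≠ 0 := by
  obtain ⟨x, hx, hPx⟩ : ∃ x ∈ Set.Ioo (-1 : ℝ) 1, (gegenbauer (l - r) d).eval x ≠ 0 := by
    by_contra! hroots
    exact h (eq_zero_of_infinite_isRoot _ ((Set.Ioo_infinite (by norm_num)).mono hroots))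
  have hsin : Real.sin (Real.arccos x) ≠ 0 := by
    rw [Real.sin_arccos]
    exact (Real.sqrt_pos.mpr (by nlinarith [hx.1, hx.2])).ne'
  refine ⟨(0, Real.arccos x), ?_⟩
  simp only [Ffun, Real.cos_arccos hx.1.le hx.2.le]
  exact mul_ne_zero (mul_ne_zero (Complex.exp_ne_zero _) (ofReal_ne_zero.mpr hPx))
    (pow_ne_zero _ (ofReal_ne_zero.mpr hsin))

end Basis

/-- `z·F_{p,l} = p·F_{p,l}`; `n⁻·F_{p,l}` is a scalar multiple of `F_{p-2,l}`; and
`n⁻·F_{p,l} = 0` if and only if `d = 0` (i.e. `p = 2(l-r)`). -/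
theorem lowering_operator_on_basis (n : ℕ) (hn : 2 ≤ n) (r : ℝ)
    (hr : r = (1 - (n : ℝ)) / 2) (l : ℕ) :
    (∀ (d : ℕ) (p : ℝ × ℝ),
      zOp (Ffun r l d) p = ((2 * ((l : ℝ) + d - r) : ℝ) : ℂ) * Ffun r l d p) ∧
    (∀ d : ℕ, ∃ c : ℂ, ∀ p : ℝ × ℝ, nMinus r (Ffun r l (d + 1)) p = c * Ffun r l d p) ∧
    (∀ d : ℕ, (∀ p : ℝ × ℝ, nMinus r (Ffun r l d) p = 0) ↔ d = 0) := by
  have hα : 0 < (l : ℝ) - r := by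
    have : (2 : ℝ) ≤ n := by exact_mod_cast hn
    rw [hr]
    linarith [(l.cast_nonneg : (0 : ℝ) ≤ l)]
  refine ⟨zOp_Ffun r l, fun d => ⟨_, nMinus_Ffun_succ r l d⟩, fun d => ⟨fun hzero => ?_, ?_⟩⟩
  · by_contra hd
    obtain ⟨m, rfl⟩ := Nat.exists_eq_succ_of_ne_zero hd
    obtain ⟨p, hp⟩ := exists_Ffun_ne_zero r l (gegenbauer_ne_zero hα m)
    have hcoeff : ((m + 2 * (l - r) : ℝ) : ℂ) ≠ 0 := ofReal_ne_zero.mpr (by positivity)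
    exact mul_ne_zero hcoeff hp (nMinus_Ffun_succ r l m p ▸ hzero p)
  · rintro rfl
    exact nMinus_Ffun_zero r l
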